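/- For p ∈ (1, ∞) and the function Ψ(x) = |x|^(p-2)·x (with Ψ(0)=0), if β ≥ max(p,2), then for all real x, y: (Ψ(y) − Ψ(x))·(y − x) ≥ 2^(2−p)·min(1, p−1)·|y − x|^β·(|y| + |x|)^(p−β). -/

import Mathlib

/-!
Write `x = c - m` and `y = c + m`. Both sides are invariant under `(x, y) ↦ (y, x)` and, Ψ being
odd, under `(x, y) ↦ (-x, -y)`, so we may take `c, m ≥ 0`; then `|y - x| = 2m` and
`|y| + |x| = 2 max(c, m)`. As `m ≤ max(c, m)`, lowering `β` to `max(p, 2)` only increases the left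
side, and the claim becomes, with `q = p - 1`:

* for `p ≥ 2`: `Ψ(c + m) - Ψ(c - m) ≥ 2 m^q`, by superadditivity of `t^q` when `m ≤ c` and by its
  midpoint convexity when `c ≤ m`;
* for `p ≤ 2`: `Ψ(c + m) - Ψ(c - m) ≥ 2 q max(c, m)^(q-1) m`. When `m ≤ c` this is the mean value
  theorem for `s ↦ (c + s)^q - (c - s)^q`, whose derivative `q ((c + s)^(q-1) + (c - s)^(q-1))` is
  at least `2 q c^(q-1)` by AM-GM, as `(c + s)(c - s) ≤ c²`. When `c ≤ m` it follows from
  subadditivity of `t^q`, `(2m)^q ≤ (m + c)^q + (m - c)^q`, and `2q ≤ 2^q`.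
-/

noncomputable def Psi (p : ℝ) (x : ℝ) : ℝ := Real.sign x * |x| ^ (p - 1)

open Real Set

section Rpow

variable {q c m : ℝ}

-- The tangent line of `2 ^ q` at `q = 1` is `2 + 2 log 2 (q - 1) ≥ 2 q` for `q ≤ 1`.
lemma two_mul_le_two_rpow (hq : q ≤ 1) : 2 * q ≤ (2 : ℝ) ^ q := by
  have hlog : log 2 ≤ 1 := by linarith [log_le_sub_one_of_pos (x := 2) two_pos]
  have hexp := add_one_le_exp (log 2 * (q - 1))
  calc 2 * q ≤ 2 * (log 2 * (q - 1) + 1) := by nlinarith [log_nonneg one_le_two]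
    _ ≤ 2 * exp (log 2 * (q - 1)) := by gcongr
    _ = (2 : ℝ) ^ q := by
      rw [← rpow_def_of_pos two_pos, rpow_sub two_pos, rpow_one]; ring

lemma two_mul_rpow_le_rpow_add_add_rpow_sub_of_nonpos (hq : q ≤ 0) {s : ℝ} (hs : |s| < c) :
    2 * c ^ q ≤ (c + s) ^ q + (c - s) ^ q := by
  have hc : 0 < c := (abs_nonneg s).trans_lt hs
  have hplus : 0 < c + s := by linarith [neg_abs_le s]
  have hminus : 0 < c - s := by linarith [le_abs_self s]
  have hprod : (c ^ q) ^ 2 ≤ (c + s) ^ q * (c - s) ^ q := by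
    rw [sq, ← mul_rpow hc.le hc.le, ← mul_rpow hplus.le hminus.le]
    exact rpow_le_rpow_of_nonpos (mul_pos hplus hminus) (by nlinarith [sq_nonneg s]) hq
  nlinarith [sq_nonneg ((c + s) ^ q - (c - s) ^ q), rpow_pos_of_pos hc q,
    rpow_pos_of_pos hplus q, rpow_pos_of_pos hminus q]

lemma two_mul_mul_rpow_le_rpow_add_sub_rpow_sub (hq0 : 0 ≤ q) (hq1 : q ≤ 1) (hm : 0 ≤ m)
    (hmc : m ≤ c) : 2 * q * c ^ (q - 1) * m ≤ (c + m) ^ q - (c - m) ^ q := by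
  set f : ℝ → ℝ := fun s ↦ (c + s) ^ q - (c - s) ^ q
  have hderiv : ∀ s ∈ Ioo 0 c,
      HasDerivAt f (q * (c + s) ^ (q - 1) + q * (c - s) ^ (q - 1)) s := by
    rintro s ⟨hs0, hsc⟩
    have hplus := ((hasDerivAt_id' s).const_add c).rpow_const (p := q) (.inl (by linarith))
    have hminus := ((hasDerivAt_id' s).const_sub c).rpow_const (p := q) (.inl (by linarith))
    exact (hplus.sub hminus).congr_deriv (by ring)
  have hcont : ContinuousOn f (Icc 0 c) := by
    intro s _
    exact ((continuousAt_rpow_const _ q (.inr hq0)).comp (by fun_prop)).sub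
      ((continuousAt_rpow_const _ q (.inr hq0)).comp (by fun_prop)) |>.continuousWithinAt
  have hmono := (convex_Icc 0 c).mul_sub_le_image_sub_of_le_deriv hcont
    (fun s hs ↦ (hderiv s (by rwa [interior_Icc] at hs)).differentiableAt.differentiableWithinAt)
    (C := 2 * q * c ^ (q - 1)) (fun s hs ↦ by
      rw [interior_Icc] at hs
      rw [(hderiv s hs).deriv]
      have := two_mul_rpow_le_rpow_add_add_rpow_sub_of_nonpos (c := c) (s := s)
        (by linarith : q - 1 ≤ 0) (by rw [abs_of_pos hs.1]; exact hs.2)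
      nlinarith)
    0 ⟨le_rfl, hm.trans hmc⟩ m ⟨hm, hmc⟩ hm
  simpa [f] using hmono

lemma rpow_mul_rpow_sub_le_of_le {b r : ℝ} {M : ℝ} (hm : 0 ≤ m) (hmM : m ≤ M) (hq : 0 < q)
    (hqb : q ≤ b) : m ^ b * M ^ (r - b) ≤ m ^ q * M ^ (r - q) := by
  rcases hm.eq_or_lt with rfl | hm
  · rw [zero_rpow (by linarith), zero_mul]
    positivity
  have hM : 0 < M := hm.trans_le hmM
  have hratio : (m / M) ^ (b - q) ≤ 1 :=
    rpow_le_one (by positivity) ((div_le_one hM).2 hmM) (by linarith)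
  calc m ^ b * M ^ (r - b) = (m / M) ^ (b - q) * (m ^ q * M ^ (r - q)) := by
        rw [div_rpow hm.le hM.le, rpow_sub hm, rpow_sub hM, rpow_sub hM, rpow_sub hM]
        field_simp
    _ ≤ 1 * (m ^ q * M ^ (r - q)) := by gcongr
    _ = m ^ q * M ^ (r - q) := one_mul _

end Rpow

section Psi

variable {p x : ℝ}

lemma Psi_neg (p x : ℝ) : Psi p (-x) = -Psi p x := by
  simp [Psi, Real.sign_neg]

lemma Psi_of_nonneg (hp : p ≠ 1) (hx : 0 ≤ x) : Psi p x = x ^ (p - 1) := by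
  rcases hx.eq_or_lt with rfl | hx
  · simp [Psi, zero_rpow (sub_ne_zero.2 hp)]
  · simp [Psi, Real.sign_of_pos hx, abs_of_pos hx]

lemma Psi_of_nonpos (hp : p ≠ 1) (hx : x ≤ 0) : Psi p x = -(-x) ^ (p - 1) := by
  rw [← Psi_of_nonneg hp (neg_nonneg.2 hx), Psi_neg, neg_neg]

variable {c m : ℝ}

lemma two_mul_rpow_le_Psi_add_sub_Psi_sub (hp : 2 ≤ p) (hc : 0 ≤ c) (hm : 0 ≤ m) :
    2 * m ^ (p - 1) ≤ Psi p (c + m) - Psi p (c - m) := by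
  have hp1 : p ≠ 1 := by linarith
  rw [Psi_of_nonneg hp1 (by linarith)]
  rcases le_total m c with hmc | hcm
  · rw [Psi_of_nonneg hp1 (by linarith)]
    have hsuper := add_rpow_le_rpow_add (sub_nonneg.2 hmc) (by linarith : 0 ≤ 2 * m)
      (by linarith : 1 ≤ p - 1)
    have htwo : 2 ≤ (2 : ℝ) ^ (p - 1) := self_le_rpow_of_one_le one_le_two (by linarith)
    rw [mul_rpow zero_le_two hm, show c - m + 2 * m = c + m by ring] at hsuper
    nlinarith [rpow_nonneg hm (p - 1)]
  · rw [Psi_of_nonpos hp1 (by linarith), neg_sub, sub_neg_eq_add]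
    have hconv := (convexOn_rpow (by linarith : 1 ≤ p - 1)).2
      (mem_Ici.2 (by linarith : 0 ≤ c + m)) (mem_Ici.2 (sub_nonneg.2 hcm))
      (by norm_num : (0 : ℝ) ≤ 1 / 2) (by norm_num : (0 : ℝ) ≤ 1 / 2) (by norm_num)
    simp only [smul_eq_mul, show 1 / 2 * (c + m) + 1 / 2 * (m - c) = m by ring] at hconv
    linarith

lemma two_mul_mul_rpow_max_le_Psi_add_sub_Psi_sub (hp1 : 1 < p) (hp2 : p ≤ 2) (hc : 0 ≤ c)
    (hm : 0 ≤ m) : 2 * (p - 1) * max c m ^ (p - 2) * m ≤ Psi p (c + m) - Psi p (c - m) := by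
  have hp1' : p ≠ 1 := hp1.ne'
  rw [Psi_of_nonneg hp1' (by linarith)]
  rcases le_total m c with hmc | hcm
  · rw [Psi_of_nonneg hp1' (by linarith), max_eq_left hmc, show p - 2 = p - 1 - 1 by ring]
    exact two_mul_mul_rpow_le_rpow_add_sub_rpow_sub (by linarith) (by linarith) hm hmc
  · rw [Psi_of_nonpos hp1' (by linarith), neg_sub, sub_neg_eq_add, max_eq_right hcm]
    have hsub := rpow_add_le_add_rpow (by linarith : 0 ≤ c + m) (sub_nonneg.2 hcm)
      (by linarith : 0 ≤ p - 1) (by linarith : p - 1 ≤ 1)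
    rw [show c + m + (m - c) = 2 * m by ring, mul_rpow zero_le_two hm] at hsub
    have htwo := two_mul_le_two_rpow (by linarith : p - 1 ≤ 1)
    have hpow : m ^ (p - 2) * m = m ^ (p - 1) := by
      rw [← rpow_add_one' hm (by linarith)]; ring_nf
    nlinarith [rpow_nonneg hm (p - 1)]

end Psi

lemma psi_monotonicity_centered {p β c m : ℝ} (hp : 1 < p) (hβ : max p 2 ≤ β) (hc : 0 ≤ c)
    (hm : 0 ≤ m) :
    2 ^ (2 - p) * min 1 (p - 1) * (2 * m) ^ β * (2 * max c m) ^ (p - β)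
      ≤ (Psi p (c + m) - Psi p (c - m)) * (2 * m) := by
  have hγ : 0 < max p 2 := lt_max_of_lt_right two_pos
  have hscale : 2 ^ (2 - p) * (2 * m) ^ β * (2 * max c m) ^ (p - β)
      = 4 * (m ^ β * max c m ^ (p - β)) := by
    rw [mul_rpow zero_le_two hm, mul_rpow zero_le_two (hm.trans (le_max_right c m))]
    have h4 : (2 : ℝ) ^ (2 - p) * 2 ^ β * 2 ^ (p - β) = 4 := by
      rw [← rpow_add two_pos, ← rpow_add two_pos]; norm_num
    linear_combination (m ^ β * max c m ^ (p - β)) * h4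
  calc 2 ^ (2 - p) * min 1 (p - 1) * (2 * m) ^ β * (2 * max c m) ^ (p - β)
      = 4 * min 1 (p - 1) * (m ^ β * max c m ^ (p - β)) := by
        linear_combination min 1 (p - 1) * hscale
    _ ≤ 4 * min 1 (p - 1) * (m ^ max p 2 * max c m ^ (p - max p 2)) := by
        have := rpow_mul_rpow_sub_le_of_le (r := p) hm (le_max_right c m) hγ hβ
        gcongr
    _ ≤ (Psi p (c + m) - Psi p (c - m)) * (2 * m) := by
        rcases le_total p 2 with hp2 | hp2
        · rw [max_eq_right hp2, min_eq_right (by linarith), rpow_two]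
          nlinarith [two_mul_mul_rpow_max_le_Psi_add_sub_Psi_sub hp hp2 hc hm]
        · have hpow : m ^ p = m ^ (p - 1) * m := by
            rw [← rpow_add_one' hm (by linarith)]; ring_nf
          rw [max_eq_left hp2, min_eq_left (by linarith), sub_self, rpow_zero, mul_one, hpow]
          nlinarith [two_mul_rpow_le_Psi_add_sub_Psi_sub hp2 hc hm]

lemma forall_of_centered {P : ℝ → ℝ → Prop} (swap : ∀ x y, P x y → P y x)
    (neg : ∀ x y, P x y → P (-x) (-y)) (h : ∀ c m, 0 ≤ c → 0 ≤ m → P (c - m) (c + m)) :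
    ∀ x y, P x y := by
  intro x y
  have key : ∀ x y, x ≤ y → 0 ≤ x + y → P x y := by
    intro x y hxy hs
    convert h ((x + y) / 2) ((y - x) / 2) (by linarith) (by linarith) using 1 <;> ring
  rcases le_total x y with hxy | hxy <;> rcases le_total 0 (x + y) with hs | hs
  · exact key x y hxy hs
  · simpa using swap _ _ (neg _ _ (key (-y) (-x) (by linarith) (by linarith)))
  · exact swap _ _ (key y x hxy (by linarith))
  · simpa using neg _ _ (key (-x) (-y) (by linarith) (by linarith))

theorem psi_monotonicity (p β : ℝ) (hp : 1 < p) (hβ : max p 2 ≤ β) (x y : ℝ) :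
    2 ^ (2 - p) * min 1 (p - 1) * |y - x| ^ β * (|y| + |x|) ^ (p - β)
      ≤ (Psi p y - Psi p x) * (y - x) := by
  revert x y
  apply forall_of_centered
  · intro x y h
    rw [abs_sub_comm, add_comm]
    linarith
  · intro x y h
    rw [Psi_neg, Psi_neg, abs_neg, abs_neg, show -y - -x = -(y - x) by ring, abs_neg]
    linarith
  · intro c m hc hm
    have hsum : |c + m| + |c - m| = 2 * max c m := by
      rcases le_total m c with hmc | hcm
      · rw [abs_of_nonneg (by linarith), abs_of_nonneg (by linarith), max_eq_left hmc]; ring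
      · rw [abs_of_nonneg (by linarith), abs_of_nonpos (by linarith), max_eq_right hcm]; ring
    simp only [show c + m - (c - m) = 2 * m by ring, abs_of_nonneg (by linarith : 0 ≤ 2 * m),
      hsum]
    exact psi_monotonicity_centered hp hβ hc hm
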